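/- arXiv:1608.08146 — 5 statements merged into one kernel-verified Lean document; each statement's English description precedes it below -/
import Mathlib

section
/- Fix N, n ∈ ℕ with n ≥ 1, a matrix g : Fin N → Fin N → ℂ, and ℏ ∈ ℂ such that 1 + ℏ − ℏk ≠ 0 for every integer 1 ≤ k ≤ n. For multi-indices α', β' with |α'| = |β'| = m (m ≤ n) define T(α', β') := P(α', β') · (∏_{k=1}^{m} ℏ/(1 + ℏ − ℏk)) / (∏_{i=1}^{N} (α'_i)! · (β'_i)!). Then for all multi-indices α, β with |α| = |β| = n and every index I with β_I ≥ 1, one has (1 + ℏ − ℏn) · β_I · T(α, β) = ℏ · Σ_{d=1}^{N} g(d, I) · T(α − e_d, β − e_I). (These T(α, β) are the coefficients of the Karabegov star product with separation of variables on ℂP^N, where g(d, I) plays the role of the Fubini–Study metric component g_{Ī d}; the displayed identity is the recurrence relation (cp) characterizing that star product.) -/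
open Finset

lemma blk_lt {N : ℕ} (α : Fin N → ℕ) (x : Fin (∑ i, α i)) :
    ({p : Fin N | ∑ i ∈ Finset.Iic p, α i ≤ (x : ℕ)} : Finset (Fin N)).card < N := by
  cases N with
  | zero => exact absurd x.isLt (by simp)
  | succ M =>
    have hIic : Finset.Iic (Fin.last M) = (Finset.univ : Finset (Fin (M + 1))) := by
      ext p; simp [Fin.le_last]
    have hmem : Fin.last M ∉
        ({p : Fin (M + 1) | ∑ i ∈ Finset.Iic p, α i ≤ (x : ℕ)} : Finset (Fin (M + 1))) := by
      simp only [Finset.mem_filter, Finset.mem_univ, true_and, not_le, hIic]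
      exact x.isLt
    have hss : ({p : Fin (M + 1) | ∑ i ∈ Finset.Iic p, α i ≤ (x : ℕ)} : Finset (Fin (M + 1)))
        ⊂ Finset.univ := by
      refine Finset.ssubset_univ_iff.mpr fun h => hmem ?_
      rw [h]; exact Finset.mem_univ _
    simpa using Finset.card_lt_card hss

/-- The block (among consecutive blocks of sizes `α 0, …, α (N-1)`) containing position `x`:
positions `0, …, α 0 - 1` lie in block `0`, the next `α 1` positions in block `1`, etc. -/
def blkIdx {N : ℕ} (α : Fin N → ℕ) (x : Fin (∑ i, α i)) : Fin N :=
  ⟨({p : Fin N | ∑ i ∈ Finset.Iic p, α i ≤ (x : ℕ)} : Finset (Fin N)).card, blk_lt α x⟩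

lemma lt_blkIdx_iff {N : ℕ} (α : Fin N → ℕ) (x : Fin (∑ i, α i)) (p : Fin N) :
    (p : ℕ) < (blkIdx α x : ℕ) ↔ ∑ i ∈ Finset.Iic p, α i ≤ (x : ℕ) := by
  classical
  set F := ({p : Fin N | ∑ i ∈ Finset.Iic p, α i ≤ (x : ℕ)} : Finset (Fin N)) with hF
  have hmem : ∀ q, q ∈ F ↔ ∑ i ∈ Finset.Iic q, α i ≤ (x : ℕ) := by
    intro q; simp [hF]
  have hdc : ∀ q q' : Fin N, q' ≤ q → q ∈ F → q' ∈ F := by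
    intro q q' hle hq
    rw [hmem] at hq ⊢
    exact le_trans (Finset.sum_le_sum_of_subset (Finset.Iic_subset_Iic.mpr hle)) hq
  have hcard : (blkIdx α x : ℕ) = F.card := rfl
  rw [hcard, ← hmem]
  constructor
  · intro hlt
    by_contra hc
    have hsub : F ⊆ Finset.Iio p := by
      intro q hq
      rw [Finset.mem_Iio]
      by_contra hge
      push_neg at hge
      exact hc (hdc q p hge hq)
    have := Finset.card_le_card hsub
    rw [Fin.card_Iio] at this
    omega
  · intro hp
    have hsub : Finset.Iic p ⊆ F := fun q hq => hdc p q (Finset.mem_Iic.mp hq) hp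
    have := Finset.card_le_card hsub
    rw [Fin.card_Iic] at this
    omega

lemma blkIdx_eq_iff {N : ℕ} (α : Fin N → ℕ) (x : Fin (∑ i, α i)) (d : Fin N) :
    blkIdx α x = d ↔ (∑ i ∈ Finset.Iio d, α i ≤ (x : ℕ) ∧ (x : ℕ) < ∑ i ∈ Finset.Iic d, α i) := by
  have key : ∀ p : Fin N, ((p : ℕ) < (blkIdx α x : ℕ) ↔ ∑ i ∈ Finset.Iic p, α i ≤ (x : ℕ)) :=
    lt_blkIdx_iff α x
  constructor
  · rintro rfl
    set c := blkIdx α x with hc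
    constructor
    · rcases Nat.eq_zero_or_pos (c : ℕ) with h0 | h0
      · have : Finset.Iio c = ∅ := by
          ext q; simp only [Finset.mem_Iio, Finset.notMem_empty, iff_false]
          intro hq; rw [Fin.lt_def, h0] at hq; omega
        simp [this]
      · have hlt : (c : ℕ) - 1 < N := by omega
        set p : Fin N := ⟨(c : ℕ) - 1, by omega⟩ with hp
        have h1 : (p : ℕ) < (c : ℕ) := by simp [hp]; omega
        have h2 := (key p).mp h1
        have h3 : Finset.Iic p = Finset.Iio c := by
          ext q
          simp only [Finset.mem_Iic, Finset.mem_Iio, Fin.le_def, Fin.lt_def, hp]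
          omega
        rwa [h3] at h2
    · have h2 : ¬ (∑ i ∈ Finset.Iic c, α i ≤ (x : ℕ)) :=
        fun hcon => absurd ((key c).mpr hcon) (lt_irrefl _)
      omega
  · rintro ⟨h1, h2⟩
    have hle : (blkIdx α x : ℕ) ≤ (d : ℕ) := by
      by_contra hcon
      push_neg at hcon
      have := (key d).mp hcon
      omega
    have hge : (d : ℕ) ≤ (blkIdx α x : ℕ) := by
      rcases Nat.eq_zero_or_pos (d : ℕ) with h0 | h0
      · omega
      · set p : Fin N := ⟨(d : ℕ) - 1, by omega⟩ with hp
        have h3 : Finset.Iic p = Finset.Iio d := by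
          ext q
          simp only [Finset.mem_Iic, Finset.mem_Iio, Fin.le_def, Fin.lt_def, hp]
          omega
        have h4 : (p : ℕ) < (blkIdx α x : ℕ) := (key p).mpr (by rw [h3]; exact h1)
        simp only [hp] at h4
        omega
    exact Fin.ext (le_antisymm hle hge)

lemma sum_Iic_eq {N : ℕ} (α : Fin N → ℕ) (d : Fin N) :
    ∑ i ∈ Finset.Iic d, α i = (∑ i ∈ Finset.Iio d, α i) + α d := by
  have : Finset.Iic d = insert d (Finset.Iio d) := by
    ext q; simp [Finset.mem_Iic, Finset.mem_Iio, le_iff_lt_or_eq, or_comm]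
  rw [this, Finset.sum_insert (by simp)]
  ring

lemma card_blk_fiber {N : ℕ} (α : Fin N → ℕ) (d : Fin N) :
    (Finset.univ.filter fun x : Fin (∑ i, α i) => blkIdx α x = d).card = α d := by
  classical
  set L := ∑ i ∈ Finset.Iio d, α i with hL
  have hIic : ∑ i ∈ Finset.Iic d, α i = L + α d := sum_Iic_eq α d
  have hbound : L + α d ≤ ∑ i, α i := by
    rw [← hIic]
    exact Finset.sum_le_sum_of_subset (Finset.subset_univ _)
  have hcard : (Finset.univ.filter fun x : Fin (∑ i, α i) => blkIdx α x = d).card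
      = (Finset.univ : Finset (Fin (α d))).card := by
    refine Finset.card_bij' (i := fun x hx => ⟨(x : ℕ) - L, ?_⟩)
      (j := fun y _ => ⟨L + (y : ℕ), ?_⟩) ?_ ?_ ?_ ?_
    · rw [Finset.mem_filter, blkIdx_eq_iff] at hx
      omega
    · have := y.isLt
      omega
    · intro a ha
      exact Finset.mem_univ _
    · intro y hy
      rw [Finset.mem_filter, blkIdx_eq_iff]
      have := y.isLt
      refine ⟨Finset.mem_univ _, ?_, ?_⟩
      · show L ≤ L + (y : ℕ)
        omega
      · show L + (y : ℕ) < ∑ j ∈ Finset.Iic d, α j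
        omega
    · intro a ha
      rw [Finset.mem_filter, blkIdx_eq_iff] at ha
      apply Fin.ext
      show L + ((a : ℕ) - L) = (a : ℕ)
      omega
    · intro y hy
      apply Fin.ext
      show L + (y : ℕ) - L = (y : ℕ)
      omega
  rw [hcard, Finset.card_univ, Fintype.card_fin]


lemma sum_sub_single {N : ℕ} (β : Fin N → ℕ) (I : Fin N) (hI : 1 ≤ β I) :
    ∑ i, (β i - if i = I then 1 else 0) = (∑ i, β i) - 1 := by
  classical
  have h1 : ∑ i, β i = (∑ i, (β i - if i = I then 1 else 0)) + ∑ i, (if i = I then 1 else 0) := by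
    rw [← Finset.sum_add_distrib]
    refine Finset.sum_congr rfl fun i _ => ?_
    by_cases hiI : i = I
    · subst hiI; simp; omega
    · simp [hiI]
  have h2 : ∑ i, (if i = I then 1 else 0) = 1 := by
    rw [Finset.sum_ite_eq' Finset.univ I (fun _ => 1)]
    simp
  omega

lemma blkIdx_erase {N : ℕ} (α α' : Fin N → ℕ) (d : Fin N)
    (hα' : ∀ i, α' i = α i - if i = d then 1 else 0) (hd : 1 ≤ α d)
    (x z : Fin (∑ i, α i)) (r : Fin (∑ i, α' i))
    (hx : blkIdx α x = d)
    (hz : (z : ℕ) = if (r : ℕ) < (x : ℕ) then (r : ℕ) else (r : ℕ) + 1) :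
    blkIdx α z = blkIdx α' r := by
  classical
  have hS' : ∀ p : Fin N, ∑ i ∈ Finset.Iic p, α i
      = (∑ i ∈ Finset.Iic p, α' i) + (if d ≤ p then 1 else 0) := by
    intro p
    have : ∀ i ∈ Finset.Iic p, α i = α' i + (if i = d then 1 else 0) := by
      intro i _
      rw [hα']
      by_cases hid : i = d
      · subst hid; simp; omega
      · simp [hid]
    rw [Finset.sum_congr rfl this, Finset.sum_add_distrib]
    congr 1
    rw [Finset.sum_ite_eq' (Finset.Iic p) d (fun _ => 1)]
    simp [Finset.mem_Iic]
  rw [blkIdx_eq_iff α x d] at hx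
  obtain ⟨hx1, hx2⟩ := hx
  have hkey : ∀ p : Fin N,
      ((p : ℕ) < (blkIdx α z : ℕ) ↔ (p : ℕ) < (blkIdx α' r : ℕ)) := by
    intro p
    rw [lt_blkIdx_iff α z p, lt_blkIdx_iff α' r p]
    have h1 := hS' p
    have hiic := sum_Iic_eq α d
    rcases le_or_gt d p with hdp | hdp
    · have hmono : ∑ i ∈ Finset.Iic d, α i ≤ ∑ i ∈ Finset.Iic p, α i :=
        Finset.sum_le_sum_of_subset (Finset.Iic_subset_Iic.mpr hdp)
      rw [if_pos hdp] at h1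
      split_ifs at hz <;> omega
    · have hmono : ∑ i ∈ Finset.Iic p, α i ≤ ∑ i ∈ Finset.Iio d, α i := by
        refine Finset.sum_le_sum_of_subset ?_
        intro q hq
        rw [Finset.mem_Iic] at hq
        rw [Finset.mem_Iio]
        exact lt_of_le_of_lt hq hdp
      rw [if_neg (not_le.mpr hdp)] at h1
      split_ifs at hz <;> omega
  rcases lt_trichotomy (blkIdx α z) (blkIdx α' r) with h | h | h
  · exact absurd ((hkey _).mpr (by exact_mod_cast h)) (by simp)
  · exact h
  · exact absurd ((hkey _).mp (by exact_mod_cast h)) (by simp)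


lemma permanent_reindex {a b : Type*} [DecidableEq a] [Fintype a] [DecidableEq b] [Fintype b]
    (e : a ≃ b) (M : Matrix b b ℂ) : (M.submatrix e e).permanent = M.permanent := by
  unfold Matrix.permanent
  refine Fintype.sum_bijective e.permCongr e.permCongr.bijective _ _ fun σ => ?_
  refine Fintype.prod_equiv e _ _ fun i => ?_
  simp [Matrix.submatrix_apply, Equiv.permCongr_apply]

def pivotPerm {m : ℕ} (j : Fin (m + 1)) (p : Fin (m + 1) × Equiv.Perm (Fin m)) :
    Equiv.Perm (Fin (m + 1)) :=
  (finSuccEquiv' j).trans ((Equiv.optionCongr p.2).trans (finSuccEquiv' p.1).symm)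

lemma pivotPerm_at {m : ℕ} (j : Fin (m + 1)) (p : Fin (m + 1) × Equiv.Perm (Fin m)) :
    pivotPerm j p j = p.1 := by
  simp [pivotPerm, finSuccEquiv'_at, finSuccEquiv'_symm_none]

lemma pivotPerm_succAbove {m : ℕ} (j : Fin (m + 1)) (p : Fin (m + 1) × Equiv.Perm (Fin m))
    (x : Fin m) : pivotPerm j p (j.succAbove x) = p.1.succAbove (p.2 x) := by
  simp [pivotPerm, finSuccEquiv'_succAbove, finSuccEquiv'_symm_some]

lemma pivotPerm_bij {m : ℕ} (j : Fin (m + 1)) : Function.Bijective (pivotPerm j) := by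
  rw [Fintype.bijective_iff_injective_and_card]
  constructor
  · rintro ⟨i, τ⟩ ⟨i', τ'⟩ hpq
    have h1 : i = i' := by
      have := congrArg (fun σ : Equiv.Perm (Fin (m + 1)) => σ j) hpq
      simpa [pivotPerm_at] using this
    subst h1
    have h2 : τ = τ' := by
      ext x
      have := congrArg (fun σ : Equiv.Perm (Fin (m + 1)) => σ (j.succAbove x)) hpq
      simp only [pivotPerm_succAbove] at this
      exact congrArg Fin.val (Fin.succAbove_right_injective this)
    rw [h2]
  · simp [Fintype.card_perm, Fintype.card_prod, Fintype.card_fin, Nat.factorial_succ]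

lemma permanent_expand_col {m : ℕ} (M : Matrix (Fin (m + 1)) (Fin (m + 1)) ℂ) (j : Fin (m + 1)) :
    M.permanent = ∑ i, M i j * (M.submatrix i.succAbove j.succAbove).permanent := by
  rw [Matrix.permanent]
  rw [← Fintype.sum_bijective (pivotPerm j) (pivotPerm_bij j)
    (fun p => ∏ c, M (pivotPerm j p c) c) (fun σ => ∏ c, M (σ c) c) (fun p => rfl)]
  rw [Fintype.sum_prod_type]
  refine Finset.sum_congr rfl fun i _ => ?_
  rw [Matrix.permanent, Finset.mul_sum]
  refine Finset.sum_congr rfl fun τ _ => ?_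
  rw [Fin.prod_univ_succAbove (fun c => M (pivotPerm j (i, τ) c) c) j]
  rw [pivotPerm_at]
  congr 1
  refine Finset.prod_congr rfl fun x _ => ?_
  rw [pivotPerm_succAbove]
  rfl

lemma val_succAbove {m : ℕ} (i : Fin (m + 1)) (r : Fin m) :
    (i.succAbove r : ℕ) = if (r : ℕ) < (i : ℕ) then (r : ℕ) else (r : ℕ) + 1 := by
  rcases lt_or_ge (r.castSucc) i with h | h
  · rw [Fin.succAbove_of_castSucc_lt _ _ h, if_pos]
    · rfl
    · exact h
  · rw [Fin.succAbove_of_le_castSucc _ _ h, if_neg]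
    · rfl
    · rw [Fin.le_def] at h
      simp only [Fin.coe_castSucc] at h
      omega

/-- `blockPerm g α β` is the permanent of the `n × n` block-constant matrix `G^{α,β}`
(`n = |α| = |β|`) whose rows are partitioned into consecutive blocks of sizes
`α 0, …, α (N-1)`, columns into consecutive blocks of sizes `β 0, …, β (N-1)`, and whose
entry in row-block `p` and column-block `q` is `g p q`.  (If `|α| ≠ |β|` the value is `0`.) -/
noncomputable def blockPerm {N : ℕ} (g : Fin N → Fin N → ℂ) (α β : Fin N → ℕ) : ℂ :=
  if h : ∑ i, α i = ∑ i, β i then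
    Matrix.permanent
      (Matrix.of fun x y : Fin (∑ i, α i) => g (blkIdx α x) (blkIdx β (Fin.cast h y)))
  else 0

lemma blockPerm_expand {N : ℕ} (g : Fin N → Fin N → ℂ) (α β : Fin N → ℕ)
    (h : ∑ i, α i = ∑ i, β i) (I : Fin N) (hI : 1 ≤ β I) :
    blockPerm g α β = ∑ d : Fin N, (α d : ℂ) * g d I *
      blockPerm g (fun i => α i - if i = d then 1 else 0)
        (fun i => β i - if i = I then 1 else 0) := by
  classical
  have hβbound : ∑ i ∈ Finset.Iio I, β i + β I ≤ ∑ i, β i := by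
    rw [← sum_Iic_eq]
    exact Finset.sum_le_sum_of_subset (Finset.subset_univ _)
  have hs : 1 ≤ ∑ i, α i := by omega
  obtain ⟨m, hm⟩ : ∃ m, ∑ i, α i = m + 1 := ⟨∑ i, α i - 1, by omega⟩
  set M : Matrix (Fin (∑ i, α i)) (Fin (∑ i, α i)) ℂ :=
    Matrix.of fun x y => g (blkIdx α x) (blkIdx β (Fin.cast h y)) with hM
  have h0 : blockPerm g α β = M.permanent := by
    simp only [blockPerm]
    rw [dif_pos h]
  set e : Fin (m + 1) ≃ Fin (∑ i, α i) := finCongr hm.symm with he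
  have h1 : M.permanent = (M.submatrix e e).permanent := (permanent_reindex e M).symm
  have hjlt : ∑ i ∈ Finset.Iio I, β i < m + 1 := by omega
  set j : Fin (m + 1) := ⟨∑ i ∈ Finset.Iio I, β i, hjlt⟩ with hj
  have hcol : ∀ y : Fin (∑ i, α i), (y : ℕ) = (j : ℕ) → blkIdx β (Fin.cast h y) = I := by
    intro y hy
    rw [blkIdx_eq_iff]
    rw [Fin.coe_cast, hy]
    have := sum_Iic_eq β I
    have hjval : (j : ℕ) = ∑ i ∈ Finset.Iio I, β i := rfl
    constructor
    · exact le_rfl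
    · omega
  set G : Fin N → ℂ := fun d => g d I *
      blockPerm g (fun i => α i - if i = d then 1 else 0)
        (fun i => β i - if i = I then 1 else 0) with hG
  have key : ∀ i : Fin (m + 1),
      (M.submatrix e e) i j *
        ((M.submatrix e e).submatrix i.succAbove j.succAbove).permanent
      = G (blkIdx α (e i)) := by
    intro i
    set d := blkIdx α (e i) with hd
    set α' : Fin N → ℕ := fun i2 => α i2 - if i2 = d then 1 else 0 with hα'
    set β' : Fin N → ℕ := fun i2 => β i2 - if i2 = I then 1 else 0 with hβ'
    have hαd : 1 ≤ α d := by
      have h2 := (blkIdx_eq_iff α (e i) d).mp hd.symm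
      have h3 := sum_Iic_eq α d
      omega
    have hsα' : ∑ i2, α' i2 = m := by
      rw [hα', sum_sub_single α d hαd]
      omega
    have hsβ' : ∑ i2, β' i2 = m := by
      rw [hβ', sum_sub_single β I hI]
      omega
    have h' : ∑ i2, α' i2 = ∑ i2, β' i2 := by rw [hsα', hsβ']
    have hejval : ((e j : Fin (∑ i, α i)) : ℕ) = (j : ℕ) := by
      rw [he]; simp
    have hf1 : (M.submatrix e e) i j = g d I := by
      rw [Matrix.submatrix_apply, hM, Matrix.of_apply, hcol (e j) hejval, ← hd]
    have hf2 : ((M.submatrix e e).submatrix i.succAbove j.succAbove).permanent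
        = blockPerm g α' β' := by
      have hdif : blockPerm g α' β' =
          (Matrix.of fun x y : Fin (∑ i2, α' i2) =>
            g (blkIdx α' x) (blkIdx β' (Fin.cast h' y))).permanent := by
        simp only [blockPerm]
        rw [dif_pos h']
      set e' : Fin m ≃ Fin (∑ i2, α' i2) := finCongr hsα'.symm with he'
      rw [hdif, ← permanent_reindex e' _]
      congr 1
      ext r c
      simp only [Matrix.submatrix_apply, Matrix.of_apply, hM]
      have hα'def : ∀ i2, α' i2 = α i2 - if i2 = d then 1 else 0 := fun i2 => rfl
      have hβ'def : ∀ i2, β' i2 = β i2 - if i2 = I then 1 else 0 := fun i2 => rfl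
      have hr : blkIdx α (e (i.succAbove r)) = blkIdx α' (e' r) := by
        apply blkIdx_erase α α' d hα'def hαd (e i) _ (e' r) hd.symm
        have hv1 : ((e (i.succAbove r) : Fin (∑ i2, α i2)) : ℕ) = (i.succAbove r : ℕ) := by
          rw [he]; simp
        have hv2 : ((e' r : Fin (∑ i2, α' i2)) : ℕ) = (r : ℕ) := by
          rw [he']; simp
        have hv3 : ((e i : Fin (∑ i2, α i2)) : ℕ) = (i : ℕ) := by
          rw [he]; simp
        rw [hv1, hv2, hv3, val_succAbove]
      have hc : blkIdx β (Fin.cast h (e (j.succAbove c))) = blkIdx β' (Fin.cast h' (e' c)) := by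
        apply blkIdx_erase β β' I hβ'def hI (Fin.cast h (e j)) _ (Fin.cast h' (e' c))
          (hcol (e j) hejval)
        have hv1 : ((Fin.cast h (e (j.succAbove c)) : Fin (∑ i2, β i2)) : ℕ)
            = (j.succAbove c : ℕ) := by
          rw [Fin.coe_cast, he]; simp
        have hv2 : ((Fin.cast h' (e' c) : Fin (∑ i2, β' i2)) : ℕ) = (c : ℕ) := by
          rw [Fin.coe_cast, he']; simp
        have hv3 : ((Fin.cast h (e j) : Fin (∑ i2, β i2)) : ℕ) = (j : ℕ) := by
          rw [Fin.coe_cast]; exact hejval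
        rw [hv1, hv2, hv3, val_succAbove]
      rw [hr, hc]
    rw [hf1, hf2, hG]
  rw [h0, h1, permanent_expand_col _ j]
  calc ∑ i, (M.submatrix e e) i j *
        ((M.submatrix e e).submatrix i.succAbove j.succAbove).permanent
      = ∑ i, G (blkIdx α (e i)) := Finset.sum_congr rfl fun i _ => key i
    _ = ∑ x, G (blkIdx α x) := e.sum_comp fun x => G (blkIdx α x)
    _ = ∑ d, ∑ x ∈ Finset.univ.filter fun x => blkIdx α x = d, G (blkIdx α x) :=
        (Finset.sum_fiberwise Finset.univ (blkIdx α) fun x => G (blkIdx α x)).symm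
    _ = ∑ d, (α d : ℂ) * G d := by
        refine Finset.sum_congr rfl fun d _ => ?_
        rw [Finset.sum_congr rfl fun x hx => by rw [(Finset.mem_filter.mp hx).2],
          Finset.sum_const, card_blk_fiber, nsmul_eq_mul]
    _ = _ := by
        refine Finset.sum_congr rfl fun d _ => ?_
        rw [hG, mul_assoc]

lemma prod_factorial_erase {N : ℕ} (α : Fin N → ℕ) (d : Fin N) (hd : 1 ≤ α d) :
    ∏ i, (α i).factorial = α d * ∏ i, (α i - if i = d then 1 else 0).factorial := by
  classical
  rw [← Finset.mul_prod_erase Finset.univ (fun i => (α i).factorial) (Finset.mem_univ d),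
    ← Finset.mul_prod_erase Finset.univ (fun i => (α i - if i = d then 1 else 0).factorial)
      (Finset.mem_univ d), ← mul_assoc]
  congr 1
  · show (α d).factorial = α d * (α d - if d = d then 1 else 0).factorial
    rw [if_pos rfl]
    exact (Nat.mul_factorial_pred (by omega)).symm
  · refine Finset.prod_congr rfl fun i hi => ?_
    have hne : i ≠ d := (Finset.mem_erase.mp hi).1
    simp [hne]

/-- The coefficients of the Karabegov star product with separation of variables on `ℂP^N`:
for multi-indices `α, β` (of common weight `m`) with nonnegative components,
`T(α, β) = P(α, β) · (∏_{k=1}^{m} ℏ/(1 + ℏ - ℏk)) / (∏_i (α i)! (β i)!)`,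
where `P(α, β)` is the permanent of the block-constant matrix `G^{α,β}`; any argument
with a negative component gives `0`. -/
noncomputable def starCoeff {N : ℕ} (ℏ : ℂ) (g : Fin N → Fin N → ℂ)
    (α β : Fin N → ℤ) : ℂ :=
  if (∀ i, 0 ≤ α i) ∧ (∀ i, 0 ≤ β i) then
    blockPerm g (fun i => (α i).toNat) (fun i => (β i).toNat) *
      (∏ k ∈ Finset.Icc 1 (∑ i, (β i).toNat), ℏ / (1 + ℏ - ℏ * (k : ℂ))) /
      (∏ i, ((α i).toNat.factorial * (β i).toNat.factorial : ℂ))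
  else 0

lemma starCoeff_natCast {N : ℕ} (ℏ : ℂ) (g : Fin N → Fin N → ℂ) (a b : Fin N → ℕ) :
    starCoeff ℏ g (fun i => (a i : ℤ)) (fun i => (b i : ℤ)) =
      blockPerm g a b * (∏ k ∈ Finset.Icc 1 (∑ i, b i), ℏ / (1 + ℏ - ℏ * (k : ℂ))) /
        ∏ i, ((a i).factorial * (b i).factorial : ℂ) := by
  rw [starCoeff, if_pos ⟨fun i => Int.natCast_nonneg _, fun i => Int.natCast_nonneg _⟩]
  simp only [Int.toNat_natCast]

/-- **Recurrence relation for the coefficients of the star product with separation of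
variables on `ℂP^N`** (relation (cp) of the paper): for multi-indices `α, β` of common
weight `n ≥ 1` and any index `I` with `β I ≥ 1`,
`(1 + ℏ - ℏn) · β_I · T(α, β) = ℏ · ∑_d g d I · T(α - e_d, β - e_I)`. -/
theorem starCoeff_recurrence (N n : ℕ) (hn : 1 ≤ n) (g : Fin N → Fin N → ℂ) (ℏ : ℂ)
    (hℏ : ∀ k : ℕ, 1 ≤ k → k ≤ n → 1 + ℏ - ℏ * (k : ℂ) ≠ 0)
    (α β : Fin N → ℕ) (hα : ∑ i, α i = n) (hβ : ∑ i, β i = n)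
    (I : Fin N) (hI : 1 ≤ β I) :
    (1 + ℏ - ℏ * (n : ℂ)) * (β I : ℂ) *
        starCoeff ℏ g (fun i => (α i : ℤ)) (fun i => (β i : ℤ)) =
      ℏ * ∑ d : Fin N, g d I *
        starCoeff ℏ g (fun i => (α i : ℤ) - if i = d then 1 else 0)
          (fun i => (β i : ℤ) - if i = I then 1 else 0) := by
  classical
  obtain ⟨m, hm⟩ : ∃ m, n = m + 1 := ⟨n - 1, by omega⟩
  subst hm
  have hSig : ∑ i, α i = ∑ i, β i := hα.trans hβ.symm
  rw [starCoeff_natCast, hβ, blockPerm_expand g α β hSig I hI,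
    Finset.sum_mul, Finset.sum_div, Finset.mul_sum, Finset.mul_sum]
  refine Finset.sum_congr rfl fun d _ => ?_
  by_cases hαd : 1 ≤ α d
  · -- rewrite the summand starCoeff as a natCast starCoeff
    have harg1 : (fun i => (α i : ℤ) - if i = d then 1 else 0)
        = fun i => ((α i - if i = d then 1 else 0 : ℕ) : ℤ) := by
      funext i
      split_ifs with hh
      · subst hh; omega
      · simp
    have harg2 : (fun i => (β i : ℤ) - if i = I then 1 else 0)
        = fun i => ((β i - if i = I then 1 else 0 : ℕ) : ℤ) := by
      funext i
      split_ifs with hh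
      · subst hh; omega
      · simp
    rw [harg1, harg2, starCoeff_natCast]
    have hsum : ∑ i, (β i - if i = I then 1 else 0) = m := by
      rw [sum_sub_single β I hI, hβ]
      omega
    rw [hsum]
    have hCC : (∏ k ∈ Finset.Icc 1 (m + 1), ℏ / (1 + ℏ - ℏ * (k : ℂ)))
        = (∏ k ∈ Finset.Icc 1 m, ℏ / (1 + ℏ - ℏ * (k : ℂ)))
          * (ℏ / (1 + ℏ - ℏ * ((m + 1 : ℕ) : ℂ))) :=
      Finset.prod_Icc_succ_top (by omega) _
    have hnat : α d * β I * ∏ i, ((α i - if i = d then 1 else 0).factorial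
          * (β i - if i = I then 1 else 0).factorial)
        = ∏ i, ((α i).factorial * (β i).factorial) := by
      rw [Finset.prod_mul_distrib, Finset.prod_mul_distrib,
        prod_factorial_erase α d hαd, prod_factorial_erase β I hI]
      ring
    have hDD : (∏ i, ((α i).factorial * (β i).factorial : ℂ))
        = (α d : ℂ) * (β I : ℂ) * ∏ i, ((α i - if i = d then 1 else 0).factorial
            * (β i - if i = I then 1 else 0).factorial : ℂ) := by
      calc ∏ i, ((α i).factorial * (β i).factorial : ℂ)
          = ((∏ i, (α i).factorial * (β i).factorial : ℕ) : ℂ) := by push_cast; ring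
        _ = ((α d * β I * ∏ i, ((α i - if i = d then 1 else 0).factorial
              * (β i - if i = I then 1 else 0).factorial) : ℕ) : ℂ) := by rw [hnat]
        _ = _ := by push_cast; ring
    have hz1 : (1 + ℏ - ℏ * ((m + 1 : ℕ) : ℂ)) ≠ 0 := hℏ (m + 1) (by omega) le_rfl
    have hz2 : (α d : ℂ) ≠ 0 := Nat.cast_ne_zero.mpr (by omega)
    have hz3 : (β I : ℂ) ≠ 0 := Nat.cast_ne_zero.mpr (by omega)
    have hz4 : (∏ i, ((α i - if i = d then 1 else 0).factorial
        * (β i - if i = I then 1 else 0).factorial : ℂ)) ≠ 0 := by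
      refine Finset.prod_ne_zero_iff.mpr fun i _ => ?_
      exact mul_ne_zero (Nat.cast_ne_zero.mpr (Nat.factorial_ne_zero _))
        (Nat.cast_ne_zero.mpr (Nat.factorial_ne_zero _))
    rw [hCC, hDD]
    set P := blockPerm g (fun i => α i - if i = d then 1 else 0)
      (fun i => β i - if i = I then 1 else 0) with hP
    set C2 := ∏ k ∈ Finset.Icc 1 m, ℏ / (1 + ℏ - ℏ * (k : ℂ)) with hC2
    set D2 := ∏ i, ((α i - if i = d then 1 else 0).factorial
      * (β i - if i = I then 1 else 0).factorial : ℂ) with hD2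
    set Z := 1 + ℏ - ℏ * ((m + 1 : ℕ) : ℂ) with hZ
    field_simp
  · have h0 : (α d : ℂ) = 0 := Nat.cast_eq_zero.mpr (by omega)
    have hsc : starCoeff ℏ g (fun i => (α i : ℤ) - if i = d then 1 else 0)
        (fun i => (β i : ℤ) - if i = I then 1 else 0) = 0 := by
      have hneg : ¬ ((∀ i, (0 : ℤ) ≤ (α i : ℤ) - if i = d then 1 else 0) ∧
          (∀ i, (0 : ℤ) ≤ (β i : ℤ) - if i = I then 1 else 0)) := by
        rintro ⟨hA, -⟩
        have h2 := hA d
        rw [if_pos rfl, Int.sub_nonneg] at h2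
        exact hαd (by exact_mod_cast h2)
      rw [starCoeff, if_neg hneg]
    rw [hsc, h0]
    ring
end

section
/- Fix N, n ∈ ℕ with n ≥ 1, a matrix g : Fin N → Fin N → ℂ, and multi-indices α, β with |α| = |β| = n. For every index I with β_I ≥ 1, the permanent of the block-constant matrix G^{α,β} admits the block-column expansion P(α, β) = Σ_{K=1}^{N} α_K · g(K, I) · P(α − e_K, β − e_I), where the terms with α_K = 0 vanish. -/
open Finset

/-!
Expand the permanent of `G^{α,β}` along a column of block `I`. The row `r` contributes
`g (block of r) I` times the permanent of the complementary minor, which is again block-constant,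
now with block sizes `α - e_K` and `β - e_I` for `K` the block of `r`. A matrix
`(x, y) ↦ g (a x) (b y)` keeps its permanent when its rows and its columns are permuted
independently, so that permanent depends only on the fibre sizes of the labellings `a` and `b`.
Hence all `α K` rows of block `K` contribute the same `g K I * P(α - e_K, β - e_I)`.
-/

namespace Matrix

variable {R : Type*} [CommSemiring R]

theorem permanent_submatrix_equiv {ι κ : Type*} [Fintype ι] [DecidableEq ι] [Fintype κ]
    [DecidableEq κ] (M : Matrix κ κ R) (e f : ι ≃ κ) :
    (M.submatrix e f).permanent = M.permanent := by
  refine Fintype.sum_equiv (f.equivCongr e) _ _ fun σ => ?_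
  exact Fintype.prod_equiv f _ _ fun i => by simp

theorem permanent_succ_column_zero {n : ℕ} (A : Matrix (Fin (n + 1)) (Fin (n + 1)) R) :
    A.permanent = ∑ i, A i 0 * (A.submatrix i.succAbove Fin.succ).permanent := by
  rw [permanent, Finset.univ_perm_fin_succ, ← Finset.univ_product_univ]
  simp only [Finset.sum_map, Equiv.toEmbedding_apply, Finset.sum_product]
  refine Finset.sum_congr rfl fun i _ => Fin.cases ?_ (fun i => ?_) i
  · simp [Fin.prod_univ_succ, permanent, Finset.mul_sum]
  · -- `univ_perm_fin_succ` embeds `Perm (Fin n)` via `decomposeFin`, which differs from the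
    -- permutations of the minor by the cycle `i.cycleRange`
    rw [← permanent_permute_cols i.cycleRange, permanent, Finset.mul_sum]
    refine Finset.sum_congr rfl fun σ _ => ?_
    simp [Fin.prod_univ_succ, Fin.succAbove_cycleRange]

theorem permanent_succ_column {n : ℕ} (A : Matrix (Fin (n + 1)) (Fin (n + 1)) R)
    (j : Fin (n + 1)) :
    A.permanent = ∑ i, A i j * (A.submatrix i.succAbove j.succAbove).permanent := by
  rw [← permanent_permute_rows j.cycleRange.symm A, permanent_succ_column_zero]
  simp [submatrix_submatrix, Function.comp_def, Fin.cycleRange_symm_succ]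

theorem permanent_of_comp_eq_of_card_fiber_eq {γ ι κ : Type*} [Fintype ι] [DecidableEq ι]
    [Fintype κ] [DecidableEq κ] [DecidableEq γ] (g : γ → γ → R)
    {a b : ι → γ} {a' b' : κ → γ} (ha : ∀ c, #{x | a x = c} = #{x | a' x = c})
    (hb : ∀ c, #{y | b y = c} = #{y | b' y = c}) :
    (of fun x y => g (a x) (b y)).permanent = (of fun x y => g (a' x) (b' y)).permanent := by
  have fiberEquiv {f : ι → γ} {f' : κ → γ} (hf : ∀ c, #{x | f x = c} = #{x | f' x = c}) :
      ∃ e : ι ≃ κ, ∀ x, f' (e x) = f x :=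
    ⟨Equiv.ofFiberEquiv fun c =>
      Fintype.equivOfCardEq (by simpa [Fintype.card_subtype] using hf c), Equiv.ofFiberEquiv_map _⟩
  obtain ⟨e, he⟩ := fiberEquiv ha
  obtain ⟨f, hf⟩ := fiberEquiv hb
  rw [← permanent_submatrix_equiv _ e f]
  congr 1
  ext x y
  simp [he, hf]

end Matrix

theorem Fin.card_filter_comp_succAbove {γ : Type*} [DecidableEq γ] {m : ℕ}
    (a : Fin (m + 1) → γ) (r : Fin (m + 1)) (c : γ) :
    #{x | a (r.succAbove x) = c} = #{x | a x = c} - if c = a r then 1 else 0 := by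
  simp only [Finset.card_filter, Fin.sum_univ_succAbove _ r, eq_comm (a := c)]
  omega

section blkIdx

variable {N : ℕ} (α : Fin N → ℕ)

theorem blkIdx_eq_of_mem_Ico {x : Fin (∑ i, α i)} {K : Fin N}
    (hx : (x : ℕ) ∈ Ico (∑ i ∈ Iio K, α i) (∑ i ∈ Iic K, α i)) : blkIdx α x = K := by
  obtain ⟨hlo, hhi⟩ := Finset.mem_Ico.1 hx
  have hset : ({p : Fin N | ∑ i ∈ Iic p, α i ≤ (x : ℕ)} : Finset (Fin N)) = Iio K := by
    ext p
    simp only [mem_filter, mem_univ, true_and, mem_Iio]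
    constructor
    · intro hp
      by_contra! hKp
      exact (sum_le_sum_of_subset (Iic_subset_Iic.2 hKp)).trans hp |>.not_gt hhi
    · intro hpK
      exact (sum_le_sum_of_subset fun i hi => mem_Iio.2 ((mem_Iic.1 hi).trans_lt hpK)).trans hlo
  ext
  simp [blkIdx, hset]

theorem card_blkIdx_fiber (K : Fin N) : #{x | blkIdx α x = K} = α K := by
  have hlt (K : Fin N) : ∀ m ∈ Ico (∑ i ∈ Iio K, α i) (∑ i ∈ Iic K, α i), m < ∑ i, α i :=
    fun m hm => (mem_Ico.1 hm).2.trans_le (sum_le_sum_of_subset (subset_univ _))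
  set J := fun K => (Ico (∑ i ∈ Iio K, α i) (∑ i ∈ Iic K, α i)).attachFin (hlt K)
  have hJ (K : Fin N) : #(J K) = α K := by
    simp [J, ← sum_Iio_add_eq_sum_Iic]
  have hJsub (K : Fin N) : J K ⊆ ({x | blkIdx α x = K} : Finset _) := fun x hx => by
    simpa using blkIdx_eq_of_mem_Ico α ((mem_attachFin _).1 hx)
  have htotal : ∑ K, #(J K) = ∑ K, #{x | blkIdx α x = K} := by
    rw [← card_eq_sum_card_fiberwise fun x _ => mem_coe.2 (mem_univ (blkIdx α x)), card_univ,
      Fintype.card_fin]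
    exact sum_congr rfl fun K _ => hJ K
  -- the intervals `J K` lie in the fibres and have the same total size, so they are the fibres
  rw [← hJ K]
  exact ((sum_eq_sum_iff_of_le fun K _ => card_le_card (hJsub K)).1 htotal K (mem_univ _)).symm

end blkIdx

theorem Fintype.sum_comp_eq_sum_card_fiber_nsmul {ι κ M : Type*} [Fintype ι] [Fintype κ]
    [DecidableEq κ] [AddCommMonoid M] (a : ι → κ) (f : κ → M) :
    ∑ x, f (a x) = ∑ k, #{x | a x = k} • f k := by
  rw [← Finset.sum_fiberwise univ a fun x => f (a x)]
  refine Finset.sum_congr rfl fun k _ => ?_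
  rw [Finset.sum_congr rfl fun x hx => by rw [(mem_filter.1 hx).2], sum_const]

theorem exists_fin_card_fiber_eq {N n : ℕ} {w : Fin N → ℕ} (hw : ∑ i, w i = n) :
    ∃ a : Fin n → Fin N, ∀ k, #{x | a x = k} = w k := by
  subst hw
  exact ⟨blkIdx w, card_blkIdx_fiber w⟩

theorem blockPerm_eq_permanent {N : ℕ} (g : Fin N → Fin N → ℂ) {α β : Fin N → ℕ} {ι : Type*}
    [Fintype ι] [DecidableEq ι] {a b : ι → Fin N} (ha : ∀ k, #{x | a x = k} = α k)
    (hb : ∀ k, #{y | b y = k} = β k) :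
    blockPerm g α β = (Matrix.of fun x y => g (a x) (b y)).permanent := by
  have sum_eq_card {f : ι → Fin N} {w : Fin N → ℕ} (hf : ∀ k, #{x | f x = k} = w k) :
      ∑ k, w k = Fintype.card ι := by
    rw [← card_univ, card_eq_sum_card_fiberwise fun x _ => mem_coe.2 (mem_univ (f x))]
    simp [hf]
  have hαβ : ∑ i, α i = ∑ i, β i := (sum_eq_card ha).trans (sum_eq_card hb).symm
  rw [blockPerm, dif_pos hαβ]
  refine Matrix.permanent_of_comp_eq_of_card_fiber_eq g (fun k => ?_) fun k => ?_
  · rw [card_blkIdx_fiber, ha]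
  · rw [hb, ← card_blkIdx_fiber β k]
    exact card_equiv (finCongr hαβ) fun y => by simp

theorem block_permanent_column_expansion_general (N n : ℕ) (g : Fin N → Fin N → ℂ)
    (α β : Fin N → ℕ) (hα : ∑ i, α i = n) (hβ : ∑ i, β i = n) (I : Fin N) (hI : 1 ≤ β I) :
    blockPerm g α β =
      ∑ K : Fin N, (α K : ℂ) * g K I *
        blockPerm g (fun i => α i - if i = K then 1 else 0)
          (fun i => β i - if i = I then 1 else 0) := by
  obtain ⟨a, ha⟩ := exists_fin_card_fiber_eq hα
  obtain ⟨b, hb⟩ := exists_fin_card_fiber_eq hβ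
  obtain ⟨c, hc⟩ : ∃ c, b c = I := by
    simpa [Finset.Nonempty] using card_pos.1 ((hb I).trans_ge hI)
  obtain ⟨m, rfl⟩ := Nat.exists_eq_add_one_of_ne_zero c.pos.ne'
  have minor (r : Fin (m + 1)) :
      ((Matrix.of fun x y => g (a x) (b y)).submatrix r.succAbove c.succAbove).permanent =
        blockPerm g (fun i => α i - if i = a r then 1 else 0)
          (fun i => β i - if i = I then 1 else 0) := by
    refine (blockPerm_eq_permanent g (fun k => ?_) fun k => ?_).symm
    · rw [Fin.card_filter_comp_succAbove, ha]
    · rw [Fin.card_filter_comp_succAbove, hb, hc]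
  rw [blockPerm_eq_permanent g ha hb, Matrix.permanent_succ_column _ c]
  simp only [Matrix.of_apply, hc, minor]
  rw [Fintype.sum_comp_eq_sum_card_fiber_nsmul a
    fun K => g K I * blockPerm g (fun i => α i - if i = K then 1 else 0)
      (fun i => β i - if i = I then 1 else 0)]
  simp only [ha, nsmul_eq_mul, mul_assoc]

/-- **Block-column expansion of the permanent of a block-constant matrix.**
For multi-indices `α, β : Fin N → ℕ` of common weight `n ≥ 1` and a column-block index `I`
with `β I ≥ 1`, the permanent `P(α, β)` of the block-constant matrix `G^{α,β}` satisfies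
`P(α, β) = ∑_K α_K · g K I · P(α - e_K, β - e_I)` (the terms with `α K = 0` vanish,
thanks to the factor `α K`, so truncated subtraction is harmless there). -/
theorem block_permanent_column_expansion (N n : ℕ) (hn : 1 ≤ n) (g : Fin N → Fin N → ℂ)
    (α β : Fin N → ℕ) (hα : ∑ i, α i = n) (hβ : ∑ i, β i = n) (I : Fin N) (hI : 1 ≤ β I) :
    blockPerm g α β =
      ∑ K : Fin N, (α K : ℂ) * g K I *
        blockPerm g (fun i => α i - if i = K then 1 else 0)
          (fun i => β i - if i = I then 1 else 0) :=
  block_permanent_column_expansion_general N n g α β hα hβ I hI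
end

section
/- Let N, n ∈ ℕ, ℏ ∈ ℂ, let β : Fin N → ℕ satisfy Σ_k β_k = n, fix i ∈ {1, …, N}, and let x : (Fin N → ℤ) → ℂ be an arbitrary function. Define R(p, c, d, i) := −(δ_{pc} δ_{id} + δ_{ic} δ_{pd}) (the curvature components R_{p̄}^{c̄ d̄}_{ī} of the Fubini–Study metric on ℂP^N). Then, viewing β as an element of ℤ^N, the following identity holds: β_i · x(β) + Σ_{k=1}^{N} Σ_{p=1}^{N} (ℏ/2)(β_k − δ_{kp} − δ_{ik} + 1)(β_k − δ_{kp} − δ_{ik} + 2) · R(p, k, k, i) · x(β − e_p + 2e_k − e_i) + Σ_{1 ≤ k < k' ≤ N} Σ_{p=1}^{N} ℏ (β_k − δ_{kp} − δ_{ik} + 1)(β_{k'} − δ_{k'p} − δ_{ik'} + 1) · R(p, k', k, i) · x(β − e_p + e_k + e_{k'} − e_i) = (1 + ℏ − ℏn) · β_i · x(β). (This expresses that substituting the ℂP^N curvature into the general recurrence relation for the coefficients of the star product with separation of variables on a locally symmetric Kähler manifold reduces it to the simple recurrence (1 + ℏ − ℏn) β_i T^n_{α,β} = ℏ Σ_d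 g_{ī d} T^{n−1}_{α−e_d, β−e_i}.) -/
open Finset

/-- Kronecker delta, valued in `ℂ`. -/
def kdel {ι : Type*} [DecidableEq ι] (a b : ι) : ℂ := if a = b then 1 else 0

/-- The curvature components `R_{p̄}^{c̄ d̄}_{ī} = -(δ_{pc} δ_{id} + δ_{ic} δ_{pd})`
of the Fubini–Study metric on `ℂP^N`. -/
def RFS {N : ℕ} (p c d i : Fin N) : ℂ := -(kdel p c * kdel i d + kdel i c * kdel p d)

/-- **Reduction of the general locally symmetric recurrence on `ℂP^N`.**
Substituting the Fubini–Study curvature of `ℂP^N` into the left-hand side of the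
general recurrence relation for the coefficients of the star product with separation of
variables on a locally symmetric Kähler manifold collapses it, for an arbitrary
assignment `x : (Fin N → ℤ) → ℂ`, to `(1 + ℏ - ℏn) · β_i · x β`. -/
theorem cpn_recurrence_reduction (N n : ℕ) (ℏ : ℂ) (β : Fin N → ℕ)
    (hβ : ∑ k, β k = n) (i : Fin N) (x : (Fin N → ℤ) → ℂ) :
    (β i : ℂ) * x (fun t => (β t : ℤ)) +
      (∑ k : Fin N, ∑ p : Fin N,
        (ℏ / 2) * ((β k : ℂ) - kdel k p - kdel i k + 1) *
          ((β k : ℂ) - kdel k p - kdel i k + 2) * RFS p k k i *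
          x (fun t => (β t : ℤ) - (if t = p then 1 else 0) + 2 * (if t = k then 1 else 0)
              - (if t = i then 1 else 0))) +
      (∑ k : Fin N, ∑ k' ∈ Finset.Ioi k, ∑ p : Fin N,
        ℏ * ((β k : ℂ) - kdel k p - kdel i k + 1) *
          ((β k' : ℂ) - kdel k' p - kdel i k' + 1) * RFS p k' k i *
          x (fun t => (β t : ℤ) - (if t = p then 1 else 0) + (if t = k then 1 else 0)
              + (if t = k' then 1 else 0) - (if t = i then 1 else 0))) =
    (1 + ℏ - ℏ * (n : ℂ)) * (β i : ℂ) * x (fun t => (β t : ℤ)) := by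
  classical
  have hsum : (∑ k, (β k : ℂ)) = (n : ℂ) := by exact_mod_cast congrArg (Nat.cast : ℕ → ℂ) hβ
  set X := x (fun t => (β t : ℤ)) with hX
  -- First double sum
  have h1 : (∑ k : Fin N, ∑ p : Fin N,
        (ℏ / 2) * ((β k : ℂ) - kdel k p - kdel i k + 1) *
          ((β k : ℂ) - kdel k p - kdel i k + 2) * RFS p k k i *
          x (fun t => (β t : ℤ) - (if t = p then 1 else 0) + 2 * (if t = k then 1 else 0)
              - (if t = i then 1 else 0)))
      = -(ℏ * (β i : ℂ) * ((β i : ℂ) - 1)) * X := by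
    rw [Finset.sum_eq_single i]
    · rw [Finset.sum_eq_single i]
      · have harg : (fun t : Fin N => (β t : ℤ) - (if t = i then 1 else 0)
            + 2 * (if t = i then 1 else 0) - (if t = i then 1 else 0))
            = fun t => (β t : ℤ) := by
          funext t; by_cases ht : t = i <;> simp [ht] <;> ring
        rw [harg, ← hX]
        simp only [RFS, kdel, eq_self_iff_true, if_true]
        ring
      · intro p _ hp
        simp [RFS, kdel, hp, Ne.symm hp]
      · simp
    · intro k _ hk
      apply Finset.sum_eq_zero
      intro p _
      simp [RFS, kdel, Ne.symm hk]
    · simp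
  -- Second (triple) sum
  have h2 : (∑ k : Fin N, ∑ k' ∈ Finset.Ioi k, ∑ p : Fin N,
        ℏ * ((β k : ℂ) - kdel k p - kdel i k + 1) *
          ((β k' : ℂ) - kdel k' p - kdel i k' + 1) * RFS p k' k i *
          x (fun t => (β t : ℤ) - (if t = p then 1 else 0) + (if t = k then 1 else 0)
              + (if t = k' then 1 else 0) - (if t = i then 1 else 0)))
      = -(ℏ * (β i : ℂ)) * ((n : ℂ) - (β i : ℂ)) * X := by
    have hinner : ∀ k k' : Fin N, k < k' →
        (∑ p : Fin N,
          ℏ * ((β k : ℂ) - kdel k p - kdel i k + 1) *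
            ((β k' : ℂ) - kdel k' p - kdel i k' + 1) * RFS p k' k i *
            x (fun t => (β t : ℤ) - (if t = p then 1 else 0) + (if t = k then 1 else 0)
                + (if t = k' then 1 else 0) - (if t = i then 1 else 0)))
        = (if k' = i then -(ℏ * (β i : ℂ) * (β k : ℂ)) * X else 0)
          + (if k = i then -(ℏ * (β i : ℂ) * (β k' : ℂ)) * X else 0) := by
      intro k k' hlt
      have hne : k ≠ k' := ne_of_lt hlt
      rw [← Finset.sum_subset (Finset.subset_univ ({k, k'} : Finset (Fin N)))]
      · rw [Finset.sum_pair hne]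
        by_cases hk : k = i
        · have hk' : k' ≠ i := by rintro rfl; exact absurd hk (ne_of_lt hlt)
          subst hk
          have harg : (fun t : Fin N => (β t : ℤ) - (if t = k' then 1 else 0)
              + (if t = k then 1 else 0) + (if t = k' then 1 else 0)
              - (if t = k then 1 else 0)) = fun t => (β t : ℤ) := by
            funext t
            by_cases h1 : t = k' <;> by_cases h2 : t = k <;>
              simp [h1, h2, hne, Ne.symm hne] <;> ring
          rw [harg, ← hX]
          simp only [RFS, kdel, eq_self_iff_true, if_true, if_neg hk', if_neg (Ne.symm hk'),
            if_neg hne, if_neg (Ne.symm hne)]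
          ring
        · by_cases hk' : k' = i
          · subst hk'
            have harg : (fun t : Fin N => (β t : ℤ) - (if t = k then 1 else 0)
                + (if t = k then 1 else 0) + (if t = k' then 1 else 0)
                - (if t = k' then 1 else 0)) = fun t => (β t : ℤ) := by
              funext t
              by_cases h1 : t = k <;> by_cases h2 : t = k' <;>
                simp [h1, h2, hne, Ne.symm hne] <;> ring
            rw [harg, ← hX]
            simp only [RFS, kdel, eq_self_iff_true, if_true, if_neg hk, if_neg (Ne.symm hk),
              if_neg hne, if_neg (Ne.symm hne)]
            ring
          · simp only [RFS, kdel, eq_self_iff_true, if_true, if_neg hk, if_neg (Ne.symm hk),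
              if_neg hk', if_neg (Ne.symm hk'), if_neg hne, if_neg (Ne.symm hne)]
            ring
      · intro p _ hp
        simp only [Finset.mem_insert, Finset.mem_singleton, not_or] at hp
        simp [RFS, kdel, hp.1, hp.2]
    rw [Finset.sum_congr rfl (fun k _ => Finset.sum_congr rfl
      (fun k' hk' => hinner k k' (Finset.mem_Ioi.mp hk')))]
    have step : ∀ k : Fin N,
        (∑ k' ∈ Finset.Ioi k,
          ((if k' = i then -(ℏ * (β i : ℂ) * (β k : ℂ)) * X else 0)
            + (if k = i then -(ℏ * (β i : ℂ) * (β k' : ℂ)) * X else 0)))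
        = (if k < i then -(ℏ * (β i : ℂ) * (β k : ℂ)) * X else 0)
          + (if k = i then (∑ k' ∈ Finset.Ioi i, -(ℏ * (β i : ℂ) * (β k' : ℂ)) * X)
              else 0) := by
      intro k
      rw [Finset.sum_add_distrib]
      congr 1
      · rw [Finset.sum_ite_eq' (Finset.Ioi k) i]
        simp [Finset.mem_Ioi]
      · by_cases hk : k = i
        · subst hk; simp
        · simp [hk]
    rw [Finset.sum_congr rfl (fun k _ => step k), Finset.sum_add_distrib,
      Finset.sum_ite_eq' Finset.univ i]
    simp only [Finset.mem_univ, if_true]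
    have hIoi : Finset.Ioi i = Finset.univ.filter (fun k => i < k) := by
      ext k; simp
    rw [hIoi, Finset.sum_filter, ← Finset.sum_add_distrib]
    have hpt : ∀ k : Fin N,
        ((if k < i then -(ℏ * (β i : ℂ) * (β k : ℂ)) * X else 0)
          + (if i < k then -(ℏ * (β i : ℂ) * (β k : ℂ)) * X else 0))
        = -(ℏ * (β i : ℂ) * (β k : ℂ)) * X
          - (if k = i then -(ℏ * (β i : ℂ) * (β k : ℂ)) * X else 0) := by
      intro k
      rcases lt_trichotomy k i with h | h | h
      · simp [h, lt_asymm h, ne_of_lt h]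
      · simp [h]
      · simp [h, lt_asymm h, ne_of_gt h]
    rw [Finset.sum_congr rfl (fun k _ => hpt k), Finset.sum_sub_distrib,
      Finset.sum_ite_eq' Finset.univ i]
    simp only [Finset.mem_univ, if_true]
    have hconst : ∀ k : Fin N,
        -(ℏ * (β i : ℂ) * (β k : ℂ)) * X = (-(ℏ * (β i : ℂ)) * X) * (β k : ℂ) := by
      intro k; ring
    rw [Finset.sum_congr rfl (fun k _ => hconst k), ← Finset.mul_sum, hsum]
    ring
  rw [h1, h2]
  ring
end

section
/- Let ℏ ∈ ℂ, let g : Fin 2 → Fin 2 → ℂ (g(a, b) representing the Kähler metric component g_{a b̄} = g_{b̄ a} of a two-dimensional locally symmetric Kähler manifold), and let R : Fin 2 × Fin 2 × Fin 2 × Fin 2 → ℂ (R(p, c, d, i) representing the curvature component R_{p̄}^{c̄ d̄}_{ī}) satisfy the Kähler curvature symmetries R(p, c, d, i) = R(i, c, d, p) and R(p, c, d, i) = R(p, d, c, i). Let T assign a complex number T(α, β) to each pair of multi-indices α, β : Fin 2 → ℕ of weight |α| = |β| = 2, with the convention that T at any multi-index with a negative component is 0, and set T¹(e_a, e_b) :=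 ℏ · g(a, b). Assume that for every i ∈ {1, 2} and all multi-indices α, β with |α| = |β| = 2 the second-order recurrence relation holds: Σ_{d=1}^{2} ℏ g(d, i) · T¹(α − e_d, β − e_i) = β_i T(α, β) + Σ_{k=1}^{2} Σ_{p=1}^{2} (ℏ/2)(β_k − δ_{kp} − δ_{ik} + 1)(β_k − δ_{kp} − δ_{ik} + 2) R(p, k, k, i) T(α, β − e_p + 2e_k − e_i) + Σ_{p=1}^{2} ℏ (β_1 − δ_{1p} − δ_{i1} + 1)(β_2 − δ_{2p} − δ_{i2} + 1) R(p, 2, 1, i) T(α, β − e_p + e_1 + e_2 − e_i). Let 𝒞 be the 3×3 complex matrix 𝒞 = [[2 + ℏR(1,1,1,1), ℏR(2,1,1,1), ℏR(2,1,1,2)], [ℏR(1,2,1,1), 1 + ℏR(2,2,1,1), ℏR(2,2,1,2)], [ℏR(1,2,2,1), ℏR(2,2,2,1), 2 + ℏR(2,2,2,2)]] and 𝔊 the 3×3 matrix 𝔊 = [[g(1,1)², g(1,1)g(1,2), g(1,2)²], [2 g(1,1)g(2,1), g(1,2)g(2,1) + g(1,1)g(2,2), 2 g(1,2)g(2,2)],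 [g(2,1)², g(2,1)g(2,2), g(2,2)²]]. If 𝒞 is invertible, then the 3×3 matrix 𝒯 with rows indexed by α ∈ {(2,0), (1,1), (0,2)} and columns by β ∈ {(2,0), (1,1), (0,2)} and entries 𝒯_{α,β} = T(α, β) satisfies 𝒯 = ℏ² · 𝔊 · 𝒞⁻¹. -/
open Finset Matrix

/-- The standard basis multi-index `e_a`, as an integer vector. -/
def eZ (a : Fin 2) : Fin 2 → ℤ := fun t => if t = a then 1 else 0

/-- The first-order coefficients `T¹`, supported on pairs of standard basis vectors,
with `T¹(e_a, e_b) = ℏ · g a b` (and `0` elsewhere, in particular on any argument with a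
negative component). -/
noncomputable def T1 (ℏ : ℂ) (g : Fin 2 → Fin 2 → ℂ) (v w : Fin 2 → ℤ) : ℂ :=
  ∑ a : Fin 2, ∑ b : Fin 2, if v = eZ a ∧ w = eZ b then ℏ * g a b else 0

/-- The 3×3 matrix `𝒞` of the paper (indices shifted: paper's `1, 2` are `0, 1`). -/
noncomputable def matC (ℏ : ℂ) (R : Fin 2 × Fin 2 × Fin 2 × Fin 2 → ℂ) :
    Matrix (Fin 3) (Fin 3) ℂ :=
  !![2 + ℏ * R (0, 0, 0, 0), ℏ * R (1, 0, 0, 0), ℏ * R (1, 0, 0, 1);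
     ℏ * R (0, 1, 0, 0), 1 + ℏ * R (1, 1, 0, 0), ℏ * R (1, 1, 0, 1);
     ℏ * R (0, 1, 1, 0), ℏ * R (1, 1, 1, 0), 2 + ℏ * R (1, 1, 1, 1)]

/-- The 3×3 matrix `𝔊` of the paper, built out of the metric components. -/
noncomputable def matG (g : Fin 2 → Fin 2 → ℂ) : Matrix (Fin 3) (Fin 3) ℂ :=
  !![g 0 0 ^ 2, g 0 0 * g 0 1, g 0 1 ^ 2;
     2 * g 0 0 * g 1 0, g 0 1 * g 1 0 + g 0 0 * g 1 1, 2 * g 0 1 * g 1 1;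
     g 1 0 ^ 2, g 1 0 * g 1 1, g 1 1 ^ 2]

/-- The weight-two multi-indices `(2,0), (1,1), (0,2)`, in this order. -/
def m2 : Fin 3 → Fin 2 → ℤ := ![![2, 0], ![1, 1], ![0, 2]]

/-!
For a weight-two multi-index `α`, the recurrence at `β ∈ {(2,0), (1,1), (0,2)}` is linear in the
row `T(α, ·)`: its `T¹` side is `ℏ² 𝔊_{αβ}`, and on its `T²` side each term either has an argument
with a negative component, hence vanishes, or is `T(α, γ)` for a weight-two `γ`, with coefficient
`𝒞_{γβ}`. Hence `𝒯 𝒞 = ℏ² 𝔊`.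
-/

def m2N : Fin 3 → Fin 2 → ℕ := ![![2, 0], ![1, 1], ![0, 2]]

lemma m2N_weight (a : Fin 3) : m2N a 0 + m2N a 1 = 2 := by
  fin_cases a <;> rfl

lemma m2N_cast (a : Fin 3) : (fun t => (m2N a t : ℤ)) = m2 a := by
  fin_cases a <;> funext t <;> fin_cases t <;> rfl

/-- Column `b` of `𝒞` holds the coefficients of the recurrence at `β = m2 b` and this `i`. -/
def recurrenceIndex : Fin 3 → Fin 2 := ![0, 0, 1]

noncomputable def recurrenceLhs (ℏ : ℂ) (g : Fin 2 → Fin 2 → ℂ) (i : Fin 2) (α β : Fin 2 → ℕ) :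
    ℂ :=
  ∑ d : Fin 2, ℏ * g d i * T1 ℏ g (fun t => (α t : ℤ) - eZ d t) (fun t => (β t : ℤ) - eZ i t)

noncomputable def recurrenceRhs (ℏ : ℂ) (R : Fin 2 × Fin 2 × Fin 2 × Fin 2 → ℂ)
    (u : (Fin 2 → ℤ) → ℂ) (i : Fin 2) (β : Fin 2 → ℕ) : ℂ :=
  (β i : ℂ) * u (fun t => (β t : ℤ)) +
    (∑ k : Fin 2, ∑ p : Fin 2,
      (ℏ / 2) * ((β k : ℂ) - kdel k p - kdel i k + 1) *
        ((β k : ℂ) - kdel k p - kdel i k + 2) * R (p, k, k, i) *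
        u (fun t => (β t : ℤ) - eZ p t + 2 * eZ k t - eZ i t)) +
    (∑ p : Fin 2,
      ℏ * ((β 0 : ℂ) - kdel 0 p - kdel i 0 + 1) *
        ((β 1 : ℂ) - kdel 1 p - kdel i 1 + 1) * R (p, 1, 0, i) *
        u (fun t => (β t : ℤ) - eZ p t + eZ 0 t + eZ 1 t - eZ i t))

lemma recurrenceLhs_eq (ℏ : ℂ) (g : Fin 2 → Fin 2 → ℂ) (a b : Fin 3) :
    recurrenceLhs ℏ g (recurrenceIndex b) (m2N a) (m2N b) = ℏ ^ 2 * matG g a b := by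
  fin_cases a <;> fin_cases b <;>
    simp [recurrenceLhs, T1, matG, m2N, recurrenceIndex, eZ, funext_iff, Fin.forall_fin_two] <;>
    ring

lemma recurrenceRhs_eq (ℏ : ℂ) (R : Fin 2 × Fin 2 × Fin 2 × Fin 2 → ℂ) (u : (Fin 2 → ℤ) → ℂ)
    (hu : ∀ w, (∃ t, w t < 0) → u w = 0) (b : Fin 3) :
    recurrenceRhs ℏ R u (recurrenceIndex b) (m2N b) = ∑ c, u (m2 c) * matC ℏ R c b := by
  -- Through its two coordinates, `u` is applied to shifted multi-indices that `simp` evaluates.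
  obtain ⟨v, rfl⟩ : ∃ v : ℤ → ℤ → ℂ, u = fun w => v (w 0) (w 1) :=
    ⟨fun x y => u ![x, y], funext fun w => congrArg u (funext fun t => by fin_cases t <;> rfl)⟩
  have h₁ : v 3 (-1) = 0 := hu ![3, -1] ⟨1, by decide⟩
  have h₂ : v (-1) 3 = 0 := hu ![-1, 3] ⟨0, by decide⟩
  fin_cases b <;>
    simp [recurrenceRhs, Fin.sum_univ_two, Fin.sum_univ_three, matC, m2, m2N, recurrenceIndex,
      eZ, kdel, h₁, h₂] <;>
    ring

theorem two_dim_T2_matrix_general (ℏ : ℂ) (g : Fin 2 → Fin 2 → ℂ)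
    (R : Fin 2 × Fin 2 × Fin 2 × Fin 2 → ℂ)
    (T : (Fin 2 → ℤ) → (Fin 2 → ℤ) → ℂ)
    (hT0 : ∀ v w : Fin 2 → ℤ, ((∃ t, v t < 0) ∨ (∃ t, w t < 0)) → T v w = 0)
    (hrec : ∀ (i : Fin 2) (α β : Fin 2 → ℕ), α 0 + α 1 = 2 → β 0 + β 1 = 2 →
      (∑ d : Fin 2, ℏ * g d i *
          T1 ℏ g (fun t => (α t : ℤ) - eZ d t) (fun t => (β t : ℤ) - eZ i t)) =
        (β i : ℂ) * T (fun t => (α t : ℤ)) (fun t => (β t : ℤ)) +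
        (∑ k : Fin 2, ∑ p : Fin 2,
          (ℏ / 2) * ((β k : ℂ) - kdel k p - kdel i k + 1) *
            ((β k : ℂ) - kdel k p - kdel i k + 2) * R (p, k, k, i) *
            T (fun t => (α t : ℤ))
              (fun t => (β t : ℤ) - eZ p t + 2 * eZ k t - eZ i t)) +
        (∑ p : Fin 2,
          ℏ * ((β 0 : ℂ) - kdel 0 p - kdel i 0 + 1) *
            ((β 1 : ℂ) - kdel 1 p - kdel i 1 + 1) * R (p, 1, 0, i) *
            T (fun t => (α t : ℤ))
              (fun t => (β t : ℤ) - eZ p t + eZ 0 t + eZ 1 t - eZ i t)))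
    (hC : IsUnit (matC ℏ R).det) :
    Matrix.of (fun a b : Fin 3 => T (m2 a) (m2 b)) =
      ℏ ^ 2 • (matG g * (matC ℏ R)⁻¹) := by
  have hmul : Matrix.of (fun a b : Fin 3 => T (m2 a) (m2 b)) * matC ℏ R = ℏ ^ 2 • matG g := by
    ext a b
    have h : recurrenceLhs ℏ g (recurrenceIndex b) (m2N a) (m2N b) =
        recurrenceRhs ℏ R (T fun t => (m2N a t : ℤ)) (recurrenceIndex b) (m2N b) :=
      hrec (recurrenceIndex b) (m2N a) (m2N b) (m2N_weight a) (m2N_weight b)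
    rw [recurrenceLhs_eq, recurrenceRhs_eq _ _ _ (fun w hw => hT0 _ w (Or.inr hw)),
      m2N_cast] at h
    simpa [Matrix.mul_apply] using h.symm
  rw [← Matrix.smul_mul, ← hmul, Matrix.mul_nonsing_inv_cancel_right _ _ hC]

/-- **The second-order coefficients of the star product with separation of variables on a
two-dimensional locally symmetric Kähler manifold** (Proposition on `T²` of the paper):
if the coefficients `T = T²` satisfy the second-order instance of the general recurrence
relation (with `T¹(e_a, e_b) = ℏ g a b`), the curvature has the Kähler symmetries, and the
matrix `𝒞` is invertible, then the matrix `𝒯 = (T(α, β))` indexed by the weight-two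
multi-indices `(2,0), (1,1), (0,2)` equals `ℏ² 𝔊 𝒞⁻¹`. -/
theorem two_dim_T2_matrix (ℏ : ℂ) (g : Fin 2 → Fin 2 → ℂ)
    (R : Fin 2 × Fin 2 × Fin 2 × Fin 2 → ℂ)
    (hR1 : ∀ p c d i : Fin 2, R (p, c, d, i) = R (i, c, d, p))
    (hR2 : ∀ p c d i : Fin 2, R (p, c, d, i) = R (p, d, c, i))
    (T : (Fin 2 → ℤ) → (Fin 2 → ℤ) → ℂ)
    (hT0 : ∀ v w : Fin 2 → ℤ, ((∃ t, v t < 0) ∨ (∃ t, w t < 0)) → T v w = 0)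
    (hrec : ∀ (i : Fin 2) (α β : Fin 2 → ℕ), α 0 + α 1 = 2 → β 0 + β 1 = 2 →
      (∑ d : Fin 2, ℏ * g d i *
          T1 ℏ g (fun t => (α t : ℤ) - eZ d t) (fun t => (β t : ℤ) - eZ i t)) =
        (β i : ℂ) * T (fun t => (α t : ℤ)) (fun t => (β t : ℤ)) +
        (∑ k : Fin 2, ∑ p : Fin 2,
          (ℏ / 2) * ((β k : ℂ) - kdel k p - kdel i k + 1) *
            ((β k : ℂ) - kdel k p - kdel i k + 2) * R (p, k, k, i) *
            T (fun t => (α t : ℤ))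
              (fun t => (β t : ℤ) - eZ p t + 2 * eZ k t - eZ i t)) +
        (∑ p : Fin 2,
          ℏ * ((β 0 : ℂ) - kdel 0 p - kdel i 0 + 1) *
            ((β 1 : ℂ) - kdel 1 p - kdel i 1 + 1) * R (p, 1, 0, i) *
            T (fun t => (α t : ℤ))
              (fun t => (β t : ℤ) - eZ p t + eZ 0 t + eZ 1 t - eZ i t)))
    (hC : IsUnit (matC ℏ R).det) :
    Matrix.of (fun a b : Fin 3 => T (m2 a) (m2 b)) =
      ℏ ^ 2 • (matG g * (matC ℏ R)⁻¹) :=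
  two_dim_T2_matrix_general ℏ g R T hT0 hrec hC
end

section
/- Let N, n ∈ ℕ, g : Fin N → Fin N → ℂ, let β : Fin N → ℕ be a multi-index with |β| = n, let r : Fin n → Fin N be any function, and let c₀ : Fin n → Fin N be the (unique) monotone function with #{y | c₀ y = q} = β_q for all q. Then (∏_{q=1}^{N} (β_q)!) · Σ_{c} ∏_{x ∈ Fin n} g(r x, c x) = perm(M), where the sum ranges over all functions c : Fin n → Fin N with #{y | c y = q} = β_q for all q, and M is the n × n matrix M_{x,y} := g(r x, c₀ y). (This combinatorial identity underlies the coincidence, asserted in the paper, between the permanent-based expression of the star product with separation of variables on ℂP^N and the earlier covariant-derivative expression f ⋆ g = Σ_n [Γ(1 − n + 1/ℏ)/(n! Γ(1 + 1/ℏ))] g^{j̄₁k₁} ⋯ g^{j̄ₙkₙ} (∇_{j̄₁} ⋯ ∇_{j̄ₙ} f)(∇_{k₁} ⋯ ∇_{kₙ} g).) -/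
open Finset

/-- The permutations intertwining two labelings with equal fiber sizes are in bijection with
families of bijections between the fibers. -/
def permFiberEquiv {n N : ℕ} (c₀ c : Fin n → Fin N) :
    {σ : Equiv.Perm (Fin n) // c₀ ∘ ⇑σ = c} ≃
      (∀ q : Fin N, {y : Fin n // c y = q} ≃ {y : Fin n // c₀ y = q}) where
  toFun σ q :=
    { toFun := fun y => ⟨σ.1 y.1, by
        have := congrFun σ.2 y.1; simp only [Function.comp_apply] at this
        rw [this, y.2]⟩
      invFun := fun y => ⟨σ.1.symm y.1, by
        have := congrFun σ.2 (σ.1.symm y.1)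
        simp only [Function.comp_apply, Equiv.apply_symm_apply] at this
        rw [← this, y.2]⟩
      left_inv := fun y => by simp
      right_inv := fun y => by simp }
  invFun e :=
    ⟨(Equiv.sigmaFiberEquiv c).symm.trans
      ((Equiv.sigmaCongrRight e).trans (Equiv.sigmaFiberEquiv c₀)), by
      funext y
      simp [Equiv.sigmaFiberEquiv, Equiv.sigmaCongrRight]
      exact ((e (c y)) ⟨y, rfl⟩).2⟩
  left_inv σ := by
    ext y
    simp [Equiv.sigmaFiberEquiv, Equiv.sigmaCongrRight]
  right_inv e := by
    funext q
    ext y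
    simp [Equiv.sigmaFiberEquiv, Equiv.sigmaCongrRight]
    obtain ⟨y, hy⟩ := y
    subst hy
    rfl

/-- **The combinatorial identity relating the permanent-based and covariant-derivative
expressions of the star product on `ℂP^N`.**  Let `β` be a multi-index of weight `n`, let
`r : Fin n → Fin N` be arbitrary row labels, and let `c₀` be the monotone column labeling
whose fibers have sizes `β q`.  Then
`(∏_q (β q)!) · ∑_{c : fibers of size β} ∏_x g (r x) (c x) = perm ((x, y) ↦ g (r x) (c₀ y))`. -/
theorem factorial_sum_eq_permanent (N n : ℕ) (g : Fin N → Fin N → ℂ)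
    (β : Fin N → ℕ) (hβ : ∑ q, β q = n) (r : Fin n → Fin N) (c₀ : Fin n → Fin N)
    (hmono : Monotone c₀)
    (hcount : ∀ q : Fin N, ({y : Fin n | c₀ y = q} : Finset (Fin n)).card = β q) :
    ((∏ q : Fin N, (β q).factorial : ℕ) : ℂ) *
        ∑ c ∈ ({c : Fin n → Fin N |
            ∀ q : Fin N, ({y : Fin n | c y = q} : Finset (Fin n)).card = β q} :
            Finset (Fin n → Fin N)),
          ∏ x : Fin n, g (r x) (c x) =
      Matrix.permanent (Matrix.of fun x y : Fin n => g (r x) (c₀ y)) := by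
  classical
  -- cardinality of each fiber of the map σ ↦ c₀ ∘ σ
  have key : ∀ c : Fin n → Fin N,
      (∀ q : Fin N, (Finset.univ.filter (fun y => c y = q)).card = β q) →
      (Finset.univ.filter (fun σ : Equiv.Perm (Fin n) => c₀ ∘ ⇑σ = c)).card
        = ∏ q, (β q).factorial := by
    intro c hc
    have h1 : (Finset.univ.filter (fun σ : Equiv.Perm (Fin n) => c₀ ∘ ⇑σ = c)).card
        = Fintype.card {σ : Equiv.Perm (Fin n) // c₀ ∘ ⇑σ = c} :=
      (Fintype.card_subtype _).symm
    rw [h1, Fintype.card_congr (permFiberEquiv c₀ c), Fintype.card_pi]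
    refine Finset.prod_congr rfl fun q _ => ?_
    have hcq : Fintype.card {y : Fin n // c y = q} = β q := by
      rw [Fintype.card_subtype]; exact hc q
    have hc0q : Fintype.card {y : Fin n // c₀ y = q} = β q := by
      rw [Fintype.card_subtype]; exact hcount q
    rw [Fintype.card_equiv (Fintype.equivOfCardEq (hcq.trans hc0q.symm)), hcq]
  -- rewrite the permanent as a sum over permutations of products along rows
  rw [← Matrix.permanent_transpose]
  have hperm : Matrix.permanent (Matrix.transpose (Matrix.of fun x y : Fin n => g (r x) (c₀ y)))
      = ∑ σ : Equiv.Perm (Fin n), ∏ x : Fin n, g (r x) (c₀ (σ x)) := by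
    simp [Matrix.permanent, Matrix.transpose]
  rw [hperm]
  have himg : Finset.image (fun σ : Equiv.Perm (Fin n) => c₀ ∘ ⇑σ) Finset.univ
      = ({c : Fin n → Fin N |
            ∀ q : Fin N, ({y : Fin n | c y = q} : Finset (Fin n)).card = β q} :
            Finset (Fin n → Fin N)) := by
    ext c
    simp only [Finset.mem_image, Finset.mem_univ, true_and, Finset.mem_filter]
    constructor
    · rintro ⟨σ, rfl⟩ q
      rw [← hcount q]
      apply Finset.card_bij (fun y _ => σ y)
      · intro y hy
        simp only [Finset.mem_filter, Finset.mem_univ, true_and] at hy ⊢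
        exact hy
      · intro a _ b _ h; exact σ.injective h
      · intro y hy
        simp only [Finset.mem_filter, Finset.mem_univ, true_and] at hy ⊢
        exact ⟨σ.symm y, by simpa using hy, by simp⟩
    · intro hc
      have hcard := key c hc
      have : (Finset.univ.filter (fun σ : Equiv.Perm (Fin n) => c₀ ∘ ⇑σ = c)).Nonempty := by
        rw [← Finset.card_pos, hcard]
        exact Finset.prod_pos fun q _ => Nat.factorial_pos _
      obtain ⟨σ, hσ⟩ := this
      simp only [Finset.mem_filter] at hσ
      exact ⟨σ, hσ.2⟩
  have := Finset.sum_comp (s := (Finset.univ : Finset (Equiv.Perm (Fin n))))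
    (fun c : Fin n → Fin N => ∏ x : Fin n, g (r x) (c x))
    (fun σ : Equiv.Perm (Fin n) => c₀ ∘ ⇑σ)
  simp only [Function.comp_apply] at this
  rw [this, himg, Finset.mul_sum]
  refine Finset.sum_congr rfl fun c hc => ?_
  have hc' : ∀ q : Fin N, (Finset.univ.filter (fun y => c y = q)).card = β q := by
    simpa using hc
  rw [key c hc', nsmul_eq_mul]
end
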